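/- Let ρ(σ) = 4.88/(σ²(1 + 0.2σ²)) and α(σ) = 0.71·σ^{4/5} for σ > 0. Then the scintillation index σ_I²(α(σ), ρ(σ)) = (α + 2αρ + 2)/(α(1+ρ)²) satisfies: σ_I²·(as σ → 0⁺) ~ 2/ρ(σ) ~ 0.41σ² (matching weak-turbulence asymptotics up to first order), and σ_I² → 1 + 2/α(σ) = 1 + 2.82σ^{-4/5} as σ → ∞. Specifically: lim_{σ→∞} (σ_I²(α(σ),ρ(σ)) − 1)·σ^{4/5} = 2/0.71. -/

import Mathlib

open Real Filter Set

/-- Scintillation index of the H-K distribution. -/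
noncomputable def scintIndex (α ρ : ℝ) : ℝ := (α + 2 * α * ρ + 2) / (α * (1 + ρ) ^ 2)

/-- The paper's parameterization `ρ(σ) = 4.88/(σ²(1+0.2σ²))`. -/
noncomputable def ρHK (σ : ℝ) : ℝ := 4.88 / (σ ^ 2 * (1 + 0.2 * σ ^ 2))

/-- The paper's parameterization `α(σ) = 0.71 σ^{4/5}`. -/
noncomputable def αHK (σ : ℝ) : ℝ := 0.71 * σ ^ ((4 : ℝ) / 5)

/-! Both limits come from exact rewritings of the H-K index,
`σ_I² ρ = (2 + ρ⁻¹ + 2 (αρ)⁻¹) / (1 + ρ⁻¹)²` and `(σ_I² − 1) α = (2 − αρ²) / (1 + ρ)²`,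
so the weak-turbulence limit only needs `ρ → ∞, αρ → ∞` and the strong-turbulence limit
`ρ → 0, αρ² → 0`. For the paper's maps `αρ = 0.71 · 4.88 / (σ^{6/5} (1 + 0.2 σ²))` tends to `∞`
as `σ → 0⁺` and to `0` as `σ → ∞`. -/

open Topology

theorem scintIndex_mul_self {α ρ : ℝ} (hα : α ≠ 0) (hρ : ρ ≠ 0) :
    scintIndex α ρ * ρ = (2 + ρ⁻¹ + 2 * (α * ρ)⁻¹) / (1 + ρ⁻¹) ^ 2 := by
  unfold scintIndex
  field_simp
  ring

theorem scintIndex_sub_one_mul_self {α ρ : ℝ} (hα : α ≠ 0) (hρ : 1 + ρ ≠ 0) :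
    (scintIndex α ρ - 1) * α = (2 - α * ρ ^ 2) / (1 + ρ) ^ 2 := by
  unfold scintIndex
  field_simp
  ring

section scintIndex

variable {ι : Type*} {l : Filter ι} {α ρ : ι → ℝ}

theorem tendsto_scintIndex_mul_self (hρ : Tendsto ρ l atTop)
    (hαρ : Tendsto (fun i => α i * ρ i) l atTop) :
    Tendsto (fun i => scintIndex (α i) (ρ i) * ρ i) l (𝓝 2) := by
  have hlim : Tendsto (fun i => (2 + (ρ i)⁻¹ + 2 * (α i * ρ i)⁻¹) / (1 + (ρ i)⁻¹) ^ 2) l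
      (𝓝 ((2 + 0 + 2 * 0) / (1 + 0) ^ 2)) :=
    ((tendsto_const_nhds.add hρ.inv_tendsto_atTop).add
      (hαρ.inv_tendsto_atTop.const_mul 2)).div
      ((tendsto_const_nhds.add hρ.inv_tendsto_atTop).pow 2) (by norm_num)
  rw [show ((2 : ℝ) + 0 + 2 * 0) / (1 + 0) ^ 2 = 2 by norm_num] at hlim
  refine hlim.congr' ?_
  filter_upwards [hρ.eventually_gt_atTop 0, hαρ.eventually_gt_atTop 0] with i hρi hαρi
  exact (scintIndex_mul_self (left_ne_zero_of_mul hαρi.ne') hρi.ne').symm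

theorem tendsto_scintIndex_sub_one_mul_self (hα : ∀ᶠ i in l, α i ≠ 0)
    (hρ : Tendsto ρ l (𝓝 0)) (hαρ : Tendsto (fun i => α i * ρ i ^ 2) l (𝓝 0)) :
    Tendsto (fun i => (scintIndex (α i) (ρ i) - 1) * α i) l (𝓝 2) := by
  have hρ₁ : Tendsto (fun i => 1 + ρ i) l (𝓝 1) := by
    simpa using tendsto_const_nhds.add hρ
  have hlim : Tendsto (fun i => (2 - α i * ρ i ^ 2) / (1 + ρ i) ^ 2) l (𝓝 ((2 - 0) / 1 ^ 2)) :=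
    (tendsto_const_nhds.sub hαρ).div (hρ₁.pow 2) (by norm_num)
  rw [show ((2 : ℝ) - 0) / 1 ^ 2 = 2 by norm_num] at hlim
  refine hlim.congr' ?_
  filter_upwards [hα, hρ₁.eventually_ne one_ne_zero] with i hαi hρi
  exact (scintIndex_sub_one_mul_self hαi hρi).symm

end scintIndex

theorem tendsto_rpow_mul_one_add_nhdsGT_zero {p c : ℝ} (hp : 0 < p) (hc : 0 ≤ c) :
    Tendsto (fun σ : ℝ => σ ^ p * (1 + c * σ ^ 2)) (𝓝[>] 0) (𝓝[>] 0) := by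
  refine tendsto_nhdsWithin_iff.2 ⟨?_, ?_⟩
  · have hcont : ContinuousAt (fun σ : ℝ => σ ^ p * (1 + c * σ ^ 2)) 0 :=
      ((continuousAt_rpow_const 0 p (Or.inr hp.le)).mul (by fun_prop))
    simpa [zero_rpow hp.ne'] using hcont.tendsto.mono_left nhdsWithin_le_nhds
  · filter_upwards [self_mem_nhdsWithin] with σ (hσ : 0 < σ)
    exact mul_pos (rpow_pos_of_pos hσ p) (by positivity)

theorem tendsto_rpow_mul_one_add_atTop {p c : ℝ} (hp : 0 < p) (hc : 0 ≤ c) :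
    Tendsto (fun σ : ℝ => σ ^ p * (1 + c * σ ^ 2)) atTop atTop := by
  refine tendsto_atTop_mono' _ ?_ (tendsto_rpow_atTop hp)
  filter_upwards [eventually_ge_atTop 0] with σ hσ
  exact le_mul_of_one_le_right (rpow_nonneg hσ p) (by nlinarith [sq_nonneg σ])

theorem αHK_pos {σ : ℝ} (hσ : 0 < σ) : 0 < αHK σ :=
  mul_pos (by norm_num) (rpow_pos_of_pos hσ _)

theorem ρHK_eq (σ : ℝ) : ρHK σ = 4.88 / (σ ^ (2 : ℝ) * (1 + 0.2 * σ ^ 2)) := by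
  rw [ρHK, rpow_two]

theorem αHK_mul_ρHK {σ : ℝ} (hσ : 0 < σ) :
    αHK σ * ρHK σ = 0.71 * 4.88 / (σ ^ ((6 : ℝ) / 5) * (1 + 0.2 * σ ^ 2)) := by
  have hsplit : σ ^ (2 : ℝ) = σ ^ ((4 : ℝ) / 5) * σ ^ ((6 : ℝ) / 5) := by
    rw [← rpow_add hσ]; norm_num
  have h45 : 0 < σ ^ ((4 : ℝ) / 5) := rpow_pos_of_pos hσ _
  rw [ρHK_eq, hsplit, αHK]
  field_simp

theorem tendsto_ρHK_nhdsGT_zero : Tendsto ρHK (𝓝[>] 0) atTop := by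
  simp_rw [funext ρHK_eq, div_eq_mul_inv]
  exact (tendsto_rpow_mul_one_add_nhdsGT_zero two_pos (by norm_num)).inv_tendsto_nhdsGT_zero
    |>.const_mul_atTop (by norm_num)

theorem tendsto_ρHK_atTop : Tendsto ρHK atTop (𝓝 0) := by
  simp_rw [funext ρHK_eq]
  exact tendsto_const_nhds.div_atTop (tendsto_rpow_mul_one_add_atTop two_pos (by norm_num))

theorem tendsto_αHK_mul_ρHK_nhdsGT_zero :
    Tendsto (fun σ => αHK σ * ρHK σ) (𝓝[>] 0) atTop := by
  have h := (tendsto_rpow_mul_one_add_nhdsGT_zero (p := 6 / 5) (c := 0.2) (by norm_num)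
    (by norm_num)).inv_tendsto_nhdsGT_zero.const_mul_atTop (r := 0.71 * 4.88) (by norm_num)
  refine h.congr' ?_
  filter_upwards [self_mem_nhdsWithin] with σ (hσ : 0 < σ)
  rw [αHK_mul_ρHK hσ, div_eq_mul_inv]
  rfl

theorem tendsto_αHK_mul_ρHK_atTop : Tendsto (fun σ => αHK σ * ρHK σ) atTop (𝓝 0) := by
  have h := tendsto_const_nhds (x := (0.71 : ℝ) * 4.88).div_atTop
    (tendsto_rpow_mul_one_add_atTop (p := 6 / 5) (c := 0.2) (by norm_num) (by norm_num))
  refine h.congr' ?_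
  filter_upwards [eventually_gt_atTop 0] with σ hσ
  exact (αHK_mul_ρHK hσ).symm

/-- With `α(σ) = 0.71σ^{4/5}` and `ρ(σ) = 4.88/(σ²(1+0.2σ²))`, the H-K
scintillation index `σ_I² = (α+2αρ+2)/(α(1+ρ)²)` satisfies
`σ_I² · ρ(σ) → 2` as `σ → 0⁺` (weak-turbulence asymptotics `σ_I² ~ 2/ρ(σ)`),
and `(σ_I² − 1)·σ^{4/5} → 2/0.71` as `σ → ∞` (strong-turbulence limit
`σ_I² → 1 + 2/α(σ)`). -/
theorem stmt_16 :
    Tendsto (fun σ : ℝ => scintIndex (αHK σ) (ρHK σ) * ρHK σ)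
      (nhdsWithin 0 (Ioi 0)) (nhds 2) ∧
    Tendsto (fun σ : ℝ => (scintIndex (αHK σ) (ρHK σ) - 1) * σ ^ ((4 : ℝ) / 5))
      atTop (nhds (2 / 0.71)) := by
  refine ⟨tendsto_scintIndex_mul_self tendsto_ρHK_nhdsGT_zero tendsto_αHK_mul_ρHK_nhdsGT_zero, ?_⟩
  have hαρsq : Tendsto (fun σ => αHK σ * ρHK σ ^ 2) atTop (𝓝 0) := by
    simpa [sq, mul_assoc] using tendsto_αHK_mul_ρHK_atTop.mul tendsto_ρHK_atTop
  have hα : ∀ᶠ σ in atTop, αHK σ ≠ 0 := by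
    filter_upwards [eventually_gt_atTop 0] with σ hσ
    exact (αHK_pos hσ).ne'
  refine ((tendsto_scintIndex_sub_one_mul_self hα tendsto_ρHK_atTop hαρsq).div_const 0.71).congr
    fun σ => ?_
  rw [αHK]
  ring
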